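/- arXiv:1210.3083 — 3 statements merged into one kernel-verified Lean document; each statement's English description precedes it below -/
import Mathlib

section
/- There exists a universal constant C > 0 such that for every integer m ≥ 0, ∑_{p=0}^{m} [p]_2^{-1} [m−p]_2^{-1} ≤ C [m]_2^{-1}. Equivalently, (1/m!) ∑_{p=0}^{m} binom(m,p) (p−2)! (m−p−2)! ≤ C (m−2)!/m!, where n! := 1 whenever n ≤ 0. -/
/-- `br m = max m 1`, the bracket convention `[m]` from the paper, as a real number. -/
noncomputable def br (m : ℤ) : ℝ := max (m : ℝ) 1

/-- `brf m k = [m]_k = [m]·[m-1]⋯[m-k+1]`, the modified falling factorial. -/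
noncomputable def brf (m : ℤ) (k : ℕ) : ℝ := ∏ i ∈ Finset.range k, br (m - i)

/-!
Write `a p = [p]_2⁻¹`. For `p + q = m` one of `p, q` is at least `m / 2`, and `[m]_2 ≤ 6 [q]_2`
whenever `m ≤ 2 q`; hence `a p * a q ≤ 6 a m (a p + a q)`. Summing over `p` and using
`∑ a p ≤ 3` (for `p ≥ 2`, `a p = 1/(p-1) - 1/p` telescopes) gives the bound with `C = 36`.
The factorial form is the same sum, since `binom(m,p) (p-2)! (m-p-2)! / m! = a p * a (m-p)`.
-/

open Finset

lemma one_le_br (m : ℤ) : 1 ≤ br m := le_max_right _ _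

lemma br_pos (m : ℤ) : 0 < br m := one_pos.trans_le (one_le_br m)

lemma br_natCast {n : ℕ} (hn : 1 ≤ n) : br n = n := by
  simp only [br, Int.cast_natCast]
  exact max_eq_left (by exact_mod_cast hn)

lemma brf_two (m : ℤ) : brf m 2 = br m * br (m - 1) := by
  simp [brf, prod_range_succ]

lemma brf_two_pos (m : ℤ) : 0 < brf m 2 := by
  rw [brf_two]; exact mul_pos (br_pos m) (br_pos _)

lemma br_le_mul_br {m n : ℤ} {c : ℝ} (hc : 1 ≤ c) (h : (m : ℝ) ≤ c * br n) :
    br m ≤ c * br n :=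
  max_le h (one_le_mul_of_one_le_of_one_le hc (one_le_br n))

lemma brf_two_le_of_le_two_mul {m q : ℤ} (h : m ≤ 2 * q) : brf m 2 ≤ 6 * brf q 2 := by
  have hmq : (m : ℝ) ≤ 2 * q := by exact_mod_cast h
  have hq : (q : ℝ) ≤ br q := le_max_left _ _
  have hq' : ((q - 1 : ℤ) : ℝ) ≤ br (q - 1) := le_max_left _ _
  have h₁ : br m ≤ 2 * br q := br_le_mul_br one_le_two (by linarith)
  -- `2 q - 1 = 2 (q - 1) + 1 ≤ 3 [q - 1]`
  have h₂ : br (m - 1) ≤ 3 * br (q - 1) := by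
    refine br_le_mul_br (by norm_num) ?_
    push_cast at hq' ⊢
    linarith [one_le_br (q - 1)]
  rw [brf_two, brf_two]
  calc br m * br (m - 1) ≤ (2 * br q) * (3 * br (q - 1)) :=
        mul_le_mul h₁ h₂ (br_pos _).le (by linarith [br_pos q])
    _ = 6 * (br q * br (q - 1)) := by ring

lemma inv_brf_two_le_of_le_two_mul {m q : ℤ} (h : m ≤ 2 * q) :
    (brf q 2)⁻¹ ≤ 6 * (brf m 2)⁻¹ := by
  have hq := brf_two_pos q
  have hm := brf_two_pos m
  rw [← div_eq_mul_inv, le_div_iff₀ hm, ← div_eq_inv_mul, div_le_iff₀ hq]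
  linarith [brf_two_le_of_le_two_mul h]

lemma inv_brf_two_mul_inv_brf_two_le {m p q : ℤ} (h : m ≤ p + q) :
    (brf p 2)⁻¹ * (brf q 2)⁻¹ ≤ 6 * (brf m 2)⁻¹ * ((brf p 2)⁻¹ + (brf q 2)⁻¹) := by
  have hp := inv_pos.2 (brf_two_pos p)
  have hq := inv_pos.2 (brf_two_pos q)
  have hm := inv_pos.2 (brf_two_pos m)
  rcases (by omega : m ≤ 2 * p ∨ m ≤ 2 * q) with hmp | hmq
  · nlinarith [inv_brf_two_le_of_le_two_mul hmp]
  · nlinarith [inv_brf_two_le_of_le_two_mul hmq]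

lemma inv_brf_two_natCast_add_two (n : ℕ) :
    (brf (n + 2 : ℕ) 2)⁻¹ = (br (n + 1 : ℕ))⁻¹ - (br (n + 2 : ℕ))⁻¹ := by
  rw [brf_two, show ((n + 2 : ℕ) : ℤ) - 1 = (n + 1 : ℕ) by push_cast; ring,
    br_natCast (by omega), br_natCast (by omega)]
  have : (n : ℝ) + 1 ≠ 0 := by positivity
  have : (n : ℝ) + 2 ≠ 0 := by positivity
  push_cast
  field_simp
  ring

lemma sum_range_inv_brf_two_le (m : ℕ) :
    ∑ p ∈ range (m + 1), (brf p 2)⁻¹ ≤ 3 - (br m)⁻¹ := by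
  induction m with
  | zero => norm_num [brf_two, br]
  | succ m ih =>
    rw [sum_range_succ]
    rcases m with _ | n
    · norm_num [brf_two, br, sum_range_succ]
    · rw [inv_brf_two_natCast_add_two]
      linarith

lemma sum_range_inv_brf_two_le_three (m : ℕ) : ∑ p ∈ range (m + 1), (brf p 2)⁻¹ ≤ 3 := by
  linarith [sum_range_inv_brf_two_le m, inv_pos.2 (br_pos m)]

lemma sum_range_inv_brf_two_mul_inv_brf_two_sub_le (m : ℕ) :
    ∑ p ∈ range (m + 1), (brf p 2)⁻¹ * (brf ((m : ℤ) - p) 2)⁻¹ ≤ 36 * (brf m 2)⁻¹ := by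
  set a : ℕ → ℝ := fun p ↦ (brf p 2)⁻¹
  have hsub : ∀ p ∈ range (m + 1), (brf ((m : ℤ) - p) 2)⁻¹ = a (m - p) := by
    intro p hp
    simp only [a, Nat.cast_sub (mem_range_succ_iff.1 hp)]
  have hreflect : ∑ p ∈ range (m + 1), a (m - p) = ∑ p ∈ range (m + 1), a p := by
    simpa using sum_range_reflect a (m + 1)
  have hm : 0 ≤ a m := (inv_pos.2 (brf_two_pos m)).le
  calc ∑ p ∈ range (m + 1), (brf p 2)⁻¹ * (brf ((m : ℤ) - p) 2)⁻¹
      ≤ ∑ p ∈ range (m + 1), 6 * a m * (a p + a (m - p)) := by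
        refine sum_le_sum fun p hp ↦ ?_
        rw [hsub p hp]
        exact inv_brf_two_mul_inv_brf_two_le (by omega)
    _ = 6 * a m * (2 * ∑ p ∈ range (m + 1), a p) := by
        rw [← mul_sum, sum_add_distrib, hreflect, two_mul]
    _ ≤ 6 * a m * (2 * 3) := by
        gcongr
        exact sum_range_inv_brf_two_le_three m
    _ = 36 * a m := by ring

lemma brf_natCast_two_mul_factorial (p : ℕ) : brf p 2 * (p - 2).factorial = p.factorial := by
  rcases p with _ | _ | n
  · norm_num [brf_two, br]
  · norm_num [brf_two, br]
  · rw [brf_two, show ((n + 2 : ℕ) : ℤ) - 1 = (n + 1 : ℕ) by push_cast; ring,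
      br_natCast (by omega), br_natCast (by omega), show n + 1 + 1 - 2 = n by omega,
      Nat.factorial_succ, Nat.factorial_succ]
    push_cast
    ring

lemma inv_brf_natCast_two (p : ℕ) : (brf p 2)⁻¹ = (p - 2).factorial / p.factorial := by
  rw [eq_div_iff (by positivity), ← brf_natCast_two_mul_factorial p,
    inv_mul_cancel_left₀ (brf_two_pos _).ne']

lemma choose_mul_factorial_mul_factorial_div_factorial {m p : ℕ} (hp : p ≤ m) :
    (m.choose p : ℝ) * (p - 2).factorial * (m - p - 2).factorial / m.factorial
      = (brf p 2)⁻¹ * (brf (m - p : ℕ) 2)⁻¹ := by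
  have : (m.choose p : ℝ) ≠ 0 := by exact_mod_cast (Nat.choose_pos hp).ne'
  rw [inv_brf_natCast_two, inv_brf_natCast_two, ← Nat.choose_mul_factorial_mul_factorial hp]
  push_cast
  field_simp

/-- there is a universal constant `C > 0` such that for every `m ≥ 0`,
`∑_{p=0}^m [p]_2⁻¹ [m-p]_2⁻¹ ≤ C [m]_2⁻¹`; equivalently,
`(1/m!) ∑_{p=0}^m binom(m,p) (p-2)! (m-p-2)! ≤ C (m-2)!/m!`
(factorial convention `n! = 1` for `n ≤ 0`, i.e. truncated subtraction in `ℕ`). -/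
theorem sum_inv_brf_two_convolution :
    ∃ C : ℝ, 0 < C ∧ ∀ m : ℕ,
      (∑ p ∈ Finset.range (m + 1), (brf p 2)⁻¹ * (brf ((m : ℤ) - p) 2)⁻¹
        ≤ C * (brf m 2)⁻¹) ∧
      ((1 / (Nat.factorial m : ℝ)) *
          ∑ p ∈ Finset.range (m + 1),
            (Nat.choose m p : ℝ) * (Nat.factorial (p - 2)) * (Nat.factorial (m - p - 2))
        ≤ C * (Nat.factorial (m - 2) : ℝ) / (Nat.factorial m : ℝ)) := by
  refine ⟨36, by norm_num, fun m ↦ ⟨sum_range_inv_brf_two_mul_inv_brf_two_sub_le m, ?_⟩⟩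
  have hterm : ∀ p ∈ range (m + 1),
      1 / (m.factorial : ℝ) * ((m.choose p : ℝ) * (p - 2).factorial * (m - p - 2).factorial)
        = (brf p 2)⁻¹ * (brf ((m : ℤ) - p) 2)⁻¹ := by
    intro p hp
    rw [← Nat.cast_sub (mem_range_succ_iff.1 hp),
      ← choose_mul_factorial_mul_factorial_div_factorial (mem_range_succ_iff.1 hp)]
    ring
  rw [mul_sum, sum_congr rfl hterm, mul_div_assoc, ← inv_brf_natCast_two]
  exact sum_range_inv_brf_two_mul_inv_brf_two_sub_le m
end

section
/- There exists a universal constant C > 0 such that for every integer q ≥ 2 and every integer m ≥ 0, ∑_{p=0}^{m} ([p]_q [m−p])^{-1} ≤ C [m]^{-1}. -/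
open Finset

lemma le_br (m : ℤ) : (m : ℝ) ≤ br m := le_max_left _ _

lemma br_of_one_le {m : ℤ} (h : 1 ≤ m) : br m = m :=
  max_eq_left (by exact_mod_cast h)

lemma br_le_two_mul_br_sub {n a : ℤ} (h : 2 * a ≤ n) : br n ≤ 2 * br (n - a) := by
  have h' : (2 * a : ℝ) ≤ n := by exact_mod_cast h
  have := le_br (n - a)
  have := one_le_br (n - a)
  push_cast at *
  exact max_le (by linarith) (by linarith)

lemma br_sq_le_eight_mul {n a : ℤ} (h : n < 2 * a) : br n ^ 2 ≤ 8 * (br a * br (a - 1)) := by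
  have h' : (n : ℝ) + 1 ≤ 2 * a := by exact_mod_cast h
  have := le_br a
  have := one_le_br a
  have := le_br (a - 1)
  have := one_le_br (a - 1)
  push_cast at *
  have ha : br n ≤ 2 * br a := max_le (by linarith) (by linarith)
  have ha' : br n ≤ 4 * br (a - 1) := max_le (by linarith) (by linarith)
  nlinarith [br_pos n]

lemma brf_pos (m : ℤ) (k : ℕ) : 0 < brf m k :=
  prod_pos fun _ _ ↦ br_pos _

lemma brf_mono (m : ℤ) : Monotone (brf m) := fun _ _ hkl ↦
  prod_le_prod_of_subset_of_one_le (range_subset_range.2 hkl) (fun _ _ ↦ (br_pos _).le)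
    fun _ _ _ ↦ one_le_br _

lemma inv_brf_two_mul_br_sub_le (n a : ℤ) :
    (brf a 2 * br (n - a))⁻¹ ≤ 2 * (br n)⁻¹ * (brf a 2)⁻¹ + 8 * (br n ^ 2)⁻¹ := by
  have hA := brf_pos a 2
  have hn := br_pos n
  rcases le_or_gt (2 * a) n with h | h
  · have key : (brf a 2 * br (n - a))⁻¹ ≤ 2 * (br n)⁻¹ * (brf a 2)⁻¹ := by
      rw [show 2 * (br n)⁻¹ * (brf a 2)⁻¹ = (brf a 2 * (br n / 2))⁻¹ by field_simp]
      gcongr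
      linarith [br_le_two_mul_br_sub h]
    linarith [show 0 ≤ 8 * (br n ^ 2)⁻¹ by positivity]
  · have key : (brf a 2 * br (n - a))⁻¹ ≤ 8 * (br n ^ 2)⁻¹ := by
      rw [show 8 * (br n ^ 2)⁻¹ = (br n ^ 2 / 8)⁻¹ by field_simp]
      gcongr
      rw [brf_two] at hA ⊢
      nlinarith [br_sq_le_eight_mul h, one_le_br (n - a)]
    linarith [show 0 ≤ 2 * (br n)⁻¹ * (brf a 2)⁻¹ by positivity]

/-- there is a universal constant `C > 0` such that for all `q ≥ 2` and `m ≥ 0`,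
`∑_{p=0}^m ([p]_q [m-p])⁻¹ ≤ C [m]⁻¹`. -/
theorem sum_inv_brf_br_le :
    ∃ C : ℝ, 0 < C ∧ ∀ q : ℕ, 2 ≤ q → ∀ m : ℕ,
      ∑ p ∈ Finset.range (m + 1), (brf p q * br ((m : ℤ) - p))⁻¹ ≤ C * (br m)⁻¹ := by
  refine ⟨22, by norm_num, fun q hq m ↦ ?_⟩
  have hM := br_pos m
  have hsum := sum_range_inv_brf_two_le m
  have hcard : (m : ℝ) + 1 ≤ 2 * br m := by
    linarith [show (m : ℝ) ≤ br m by exact_mod_cast le_br m, one_le_br m]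
  calc ∑ p ∈ range (m + 1), (brf p q * br ((m : ℤ) - p))⁻¹
      ≤ ∑ p ∈ range (m + 1), (brf p 2 * br ((m : ℤ) - p))⁻¹ := by
        gcongr with p
        · exact mul_pos (brf_pos _ _) (br_pos _)
        · exact (br_pos _).le
        · exact brf_mono _ hq
    _ ≤ ∑ p ∈ range (m + 1), (2 * (br m)⁻¹ * (brf p 2)⁻¹ + 8 * (br m ^ 2)⁻¹) :=
        sum_le_sum fun p _ ↦ inv_brf_two_mul_br_sub_le m p
    _ = 2 * (br m)⁻¹ * ∑ p ∈ range (m + 1), (brf p 2)⁻¹ + ((m : ℝ) + 1) * (8 * (br m ^ 2)⁻¹) := by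
        rw [sum_add_distrib, ← mul_sum, sum_const, card_range, nsmul_eq_mul]
        push_cast
        ring
    _ ≤ 2 * (br m)⁻¹ * 3 + 2 * br m * (8 * (br m ^ 2)⁻¹) := by
        gcongr
        linarith [inv_pos.2 hM]
    _ = 22 * (br m)⁻¹ := by
        field_simp
        ring
end

section
/- There exists a universal constant C > 0 with the following property. Let θ > 0, and let (U_{k,l}), (V_{k,l}), (W_{k,l}) be families of nonnegative real numbers indexed by pairs (k,l) of nonnegative integers, satisfying the Leibniz-type bound W_{k,l} ≤ ∑_{p=0}^{k} ∑_{q=0}^{l} binom(k,p) binom(l,q) U_{p,q} V_{k−p,l−q} for all k, l. Define u_{k,l} := a_{k,l}^2 θ^{k+2l} U_{k,l}^2, v_{k,l} := a_{k,l}^2 θ^{k+2l} V_{k,l}^2, and w_{k,l} := a_{k,l}^2 θ^{k+2l} W_{k,l}^2. Then for every nonnegative integer N, ∑_{0 ≤ k+l ≤ N} w_{k,l} ≤ C ( ∑_{0 ≤ k+l ≤ N} u_{k,l} ) ( ∑_{0 ≤ k+l ≤ N} v_{k,l} ). -/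
/-- The weights `a_{k,l} = 1/((k-2)!·(l-2)!)` with the convention `n! = 1` for `n ≤ 0`
(truncated subtraction in `ℕ`). -/
noncomputable def wt (k l : ℕ) : ℝ :=
  ((Nat.factorial (k - 2) : ℝ) * (Nat.factorial (l - 2) : ℝ))⁻¹

/-- Sum of `f k l` over all pairs `(k,l)` of nonnegative integers with `k + l ≤ N`. -/
noncomputable def sumUpTo (N : ℕ) (f : ℕ → ℕ → ℝ) : ℝ :=
  ∑ k ∈ Finset.range (N + 1), ∑ l ∈ Finset.range (N + 1 - k), f k l

/-!
Write `a_{k,l} = α_k α_l` with `α_n = 1/(n-2)!` and put `descTwo n = n!/(n-2)!`. Then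
`α_k binom(k,p) = b(k,p) α_p α_{k-p}` for `b(k,p) = descTwo k / (descTwo p · descTwo (k-p))`
(`leibnizCoeff`). Since `descTwo (p+m) ≤ 3 (descTwo p + descTwo m)` and
`∑_p 1/descTwo p ≤ 6` (telescoping against `6/((p+1)(p+2))`), `∑_p b(k,p)^2 ≤ 216` for every `k`.
Multiplying the Leibniz bound by `a_{k,l}` and applying Cauchy–Schwarz gives, with
`u = weightedSq θ U` etc., the pointwise bound `w_{k,l} ≤ 216^2 ∑_{p,q} u_{p,q} v_{k-p,l-q}`.
Summed over the triangle `k + l ≤ N`, this convolution is at most the product of the triangle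
sums of `u` and `v`.
-/

open Finset Nat

def descTwo : ℕ → ℕ
  | 0 => 1
  | 1 => 1
  | n + 2 => (n + 2) * (n + 1)

lemma descTwo_pos (n : ℕ) : 0 < descTwo n := by
  rcases n with _ | _ | n <;> simp [descTwo]

lemma factorial_sub_two_mul_descTwo (n : ℕ) : (n - 2)! * descTwo n = n ! := by
  rcases n with _ | _ | n
  · rfl
  · rfl
  · show n ! * ((n + 2) * (n + 1)) = (n + 2)!
    rw [factorial_succ, factorial_succ]
    ring

lemma succ_mul_succ_succ_le_six_mul_descTwo (n : ℕ) : (n + 1) * (n + 2) ≤ 6 * descTwo n := by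
  rcases n with _ | _ | n <;> simp only [descTwo] <;> nlinarith

lemma descTwo_add_le (p m : ℕ) : descTwo (p + m) ≤ 3 * (descTwo p + descTwo m) := by
  have hpm := two_mul_le_add_sq p m
  rcases p with _ | _ | p <;> rcases m with _ | _ | m <;> simp only [descTwo, Nat.add_eq] <;>
    nlinarith

lemma sum_range_inv_descTwo_le (n : ℕ) : ∑ p ∈ range n, ((descTwo p : ℝ))⁻¹ ≤ 6 := by
  have hterm (p : ℕ) : ((descTwo p : ℝ))⁻¹ ≤ 6 / ((p : ℝ) + 1) - 6 / ((p + 1 : ℕ) + 1) := by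
    have hD : (0 : ℝ) < descTwo p := by exact_mod_cast descTwo_pos p
    have h6 : ((p : ℝ) + 1) * (p + 2) ≤ 6 * descTwo p := by
      exact_mod_cast succ_mul_succ_succ_le_six_mul_descTwo p
    calc ((descTwo p : ℝ))⁻¹ ≤ 6 / (((p : ℝ) + 1) * (p + 2)) := by
          rw [inv_eq_one_div, div_le_div_iff₀ hD (by positivity)]
          linarith
      _ = 6 / ((p : ℝ) + 1) - 6 / ((p + 1 : ℕ) + 1) := by
          push_cast
          field_simp
          ring
  calc ∑ p ∈ range n, ((descTwo p : ℝ))⁻¹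
      ≤ ∑ p ∈ range n, (6 / ((p : ℝ) + 1) - 6 / ((p + 1 : ℕ) + 1)) := sum_le_sum fun p _ => hterm p
    _ = 6 - 6 / ((n : ℝ) + 1) := by rw [sum_range_sub' (fun i : ℕ => 6 / ((i : ℝ) + 1))]; norm_num
    _ ≤ 6 := by linarith [show 0 ≤ 6 / ((n : ℝ) + 1) by positivity]

noncomputable def leibnizCoeff (k p : ℕ) : ℝ := descTwo k / (descTwo p * descTwo (k - p))

lemma leibnizCoeff_nonneg (k p : ℕ) : 0 ≤ leibnizCoeff k p := by
  unfold leibnizCoeff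
  positivity

lemma inv_factorial_sub_two_mul_choose {k p : ℕ} (hp : p ≤ k) :
    ((k - 2)! : ℝ)⁻¹ * k.choose p
      = leibnizCoeff k p * (((p - 2)! : ℝ)⁻¹ * ((k - p - 2)! : ℝ)⁻¹) := by
  have hfact : (k.choose p : ℝ) * ((p - 2)! * descTwo p) * ((k - p - 2)! * descTwo (k - p))
      = (k - 2)! * descTwo k := by
    norm_cast
    simp only [factorial_sub_two_mul_descTwo]
    exact choose_mul_factorial_mul_factorial hp
  have := descTwo_pos p
  have := descTwo_pos (k - p)
  unfold leibnizCoeff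
  field_simp
  linear_combination hfact

lemma wt_mul_choose_mul_choose {k l p q : ℕ} (hp : p ≤ k) (hq : q ≤ l) :
    wt k l * k.choose p * l.choose q
      = leibnizCoeff k p * leibnizCoeff l q * (wt p q * wt (k - p) (l - q)) := by
  simp only [wt, mul_inv]
  linear_combination (((l - 2)! : ℝ)⁻¹ * l.choose q) * inv_factorial_sub_two_mul_choose hp
    + leibnizCoeff k p * (((p - 2)! : ℝ)⁻¹ * ((k - p - 2)! : ℝ)⁻¹)
      * inv_factorial_sub_two_mul_choose hq

lemma leibnizCoeff_le {k p : ℕ} (hp : p ≤ k) :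
    leibnizCoeff k p ≤ 3 * (((descTwo p : ℝ))⁻¹ + ((descTwo (k - p) : ℝ))⁻¹) := by
  obtain ⟨m, rfl⟩ := exists_add_of_le hp
  have hp := descTwo_pos p
  have hm := descTwo_pos m
  have hadd : (descTwo (p + m) : ℝ) ≤ 3 * (descTwo p + descTwo m) := by
    exact_mod_cast descTwo_add_le p m
  unfold leibnizCoeff
  rw [add_tsub_cancel_left, div_le_iff₀ (by positivity)]
  field_simp
  linarith

lemma sum_sq_leibnizCoeff_le (k : ℕ) : ∑ p ∈ range (k + 1), leibnizCoeff k p ^ 2 ≤ 216 := by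
  have hinv_le_one (n : ℕ) : ((descTwo n : ℝ))⁻¹ ≤ 1 :=
    inv_le_one_of_one_le₀ (by exact_mod_cast descTwo_pos n)
  have hsq (p : ℕ) (hp : p ≤ k) :
      leibnizCoeff k p ^ 2 ≤ 18 * (((descTwo p : ℝ))⁻¹ + ((descTwo (k - p) : ℝ))⁻¹) := by
    have hb := leibnizCoeff_le hp
    have := hinv_le_one p
    have := hinv_le_one (k - p)
    nlinarith [leibnizCoeff_nonneg k p]
  have hreflect : ∑ p ∈ range (k + 1), ((descTwo (k - p) : ℝ))⁻¹
      = ∑ p ∈ range (k + 1), ((descTwo p : ℝ))⁻¹ :=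
    sum_range_reflect (fun p => ((descTwo p : ℝ))⁻¹) (k + 1)
  calc ∑ p ∈ range (k + 1), leibnizCoeff k p ^ 2
      ≤ ∑ p ∈ range (k + 1), 18 * (((descTwo p : ℝ))⁻¹ + ((descTwo (k - p) : ℝ))⁻¹) :=
        sum_le_sum fun p hp => hsq p (mem_range_succ_iff.mp hp)
    _ = 36 * ∑ p ∈ range (k + 1), ((descTwo p : ℝ))⁻¹ := by
        rw [← mul_sum, sum_add_distrib, hreflect]; ring
    _ ≤ 216 := by linarith [sum_range_inv_descTwo_le (k + 1)]

lemma sumUpTo_mono {N : ℕ} {f g : ℕ → ℕ → ℝ} (h : ∀ k l, f k l ≤ g k l) :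
    sumUpTo N f ≤ sumUpTo N g :=
  sum_le_sum fun k _ => sum_le_sum fun l _ => h k l

lemma sumUpTo_const_mul (N : ℕ) (c : ℝ) (f : ℕ → ℕ → ℝ) :
    sumUpTo N (fun k l => c * f k l) = c * sumUpTo N f := by
  simp only [sumUpTo, mul_sum]

def triangle (N : ℕ) : Finset (ℕ × ℕ) :=
  (range (N + 1) ×ˢ range (N + 1)).filter fun x => x.1 + x.2 ≤ N

lemma sumUpTo_eq_sum_triangle (N : ℕ) (f : ℕ → ℕ → ℝ) :
    sumUpTo N f = ∑ x ∈ triangle N, f x.1 x.2 := by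
  rw [triangle, sum_filter, sum_product]
  refine sum_congr rfl fun k hk => ?_
  rw [← sum_filter]
  congr 1
  ext l
  simp only [mem_filter, mem_range] at hk ⊢
  omega

lemma sumUpTo_conv_le (N : ℕ) {f g : ℕ → ℕ → ℝ} (hf : ∀ p q, 0 ≤ f p q) (hg : ∀ p q, 0 ≤ g p q) :
    sumUpTo N (fun k l => ∑ p ∈ range (k + 1), ∑ q ∈ range (l + 1), f p q * g (k - p) (l - q))
      ≤ sumUpTo N f * sumUpTo N g := by
  set S := (triangle N).sigma fun x => range (x.1 + 1) ×ˢ range (x.2 + 1)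
  let split : (_ : ℕ × ℕ) × ℕ × ℕ → (ℕ × ℕ) × ℕ × ℕ :=
    fun y => (y.2, (y.1.1 - y.2.1, y.1.2 - y.2.2))
  let F : (ℕ × ℕ) × ℕ × ℕ → ℝ := fun z => f z.1.1 z.1.2 * g z.2.1 z.2.2
  have hsplit_inj : Set.InjOn split S := by
    rintro ⟨⟨k, l⟩, p, q⟩ h ⟨⟨k', l'⟩, p', q'⟩ h' heq
    simp only [mem_coe, S, triangle, mem_sigma, mem_filter, mem_product, mem_range] at h h'
    simp only [split, Prod.mk.injEq] at heq
    obtain ⟨rfl, rfl, rfl, rfl⟩ : k = k' ∧ l = l' ∧ p = p' ∧ q = q' := by omega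
    rfl
  have hsplit_sub : S.image split ⊆ triangle N ×ˢ triangle N := by
    simp only [subset_iff, mem_image, S, triangle, mem_sigma, mem_filter, mem_product, mem_range]
    rintro _ ⟨⟨⟨k, l⟩, p, q⟩, h, rfl⟩
    simp only [split] at h ⊢
    omega
  calc sumUpTo N (fun k l => ∑ p ∈ range (k + 1), ∑ q ∈ range (l + 1), f p q * g (k - p) (l - q))
      = ∑ y ∈ S, F (split y) := by
        rw [sumUpTo_eq_sum_triangle, sum_sigma]
        exact sum_congr rfl fun x _ => by rw [sum_product]
    _ = ∑ z ∈ S.image split, F z := (sum_image hsplit_inj).symm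
    _ ≤ ∑ z ∈ triangle N ×ˢ triangle N, F z :=
        sum_le_sum_of_subset_of_nonneg hsplit_sub fun z _ _ => mul_nonneg (hf _ _) (hg _ _)
    _ = sumUpTo N f * sumUpTo N g := by
        rw [sumUpTo_eq_sum_triangle, sumUpTo_eq_sum_triangle, sum_mul_sum, sum_product]

noncomputable def weightedSq (θ : ℝ) (X : ℕ → ℕ → ℝ) (k l : ℕ) : ℝ :=
  wt k l ^ 2 * θ ^ (k + 2 * l) * X k l ^ 2

lemma weightedSq_nonneg {θ : ℝ} (hθ : 0 ≤ θ) (X : ℕ → ℕ → ℝ) (k l : ℕ) :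
    0 ≤ weightedSq θ X k l := by
  unfold weightedSq
  positivity

lemma weightedSq_le_of_le_leibniz {θ : ℝ} (hθ : 0 ≤ θ) {U V W : ℕ → ℕ → ℝ} {k l : ℕ}
    (hW : 0 ≤ W k l)
    (hL : W k l ≤ ∑ p ∈ range (k + 1), ∑ q ∈ range (l + 1),
        (k.choose p : ℝ) * (l.choose q : ℝ) * U p q * V (k - p) (l - q)) :
    weightedSq θ W k l ≤ 216 ^ 2 * ∑ p ∈ range (k + 1), ∑ q ∈ range (l + 1),
        weightedSq θ U p q * weightedSq θ V (k - p) (l - q) := by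
  set s := range (k + 1) ×ˢ range (l + 1)
  let c : ℕ × ℕ → ℝ := fun i => leibnizCoeff k i.1 * leibnizCoeff l i.2
  let z : ℕ × ℕ → ℝ := fun i =>
    wt i.1 i.2 * U i.1 i.2 * (wt (k - i.1) (l - i.2) * V (k - i.1) (l - i.2))
  have hwt : 0 ≤ wt k l := by unfold wt; positivity
  have hbound : wt k l * W k l ≤ ∑ i ∈ s, c i * z i := by
    refine (mul_le_mul_of_nonneg_left hL hwt).trans_eq ?_
    rw [sum_product, mul_sum]
    refine sum_congr rfl fun p hp => ?_
    rw [mul_sum]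
    refine sum_congr rfl fun q hq => ?_
    have hpq := wt_mul_choose_mul_choose (mem_range_succ_iff.mp hp) (mem_range_succ_iff.mp hq)
    linear_combination U p q * V (k - p) (l - q) * hpq
  have hc : ∑ i ∈ s, c i ^ 2 ≤ 216 ^ 2 := by
    rw [sq (216 : ℝ)]
    simp only [s, c, sum_product, mul_pow, ← mul_sum, ← sum_mul]
    exact mul_le_mul (sum_sq_leibnizCoeff_le k) (sum_sq_leibnizCoeff_le l)
      (sum_nonneg fun _ _ => sq_nonneg _) (by norm_num)
  have hcs : (wt k l * W k l) ^ 2 ≤ 216 ^ 2 * ∑ i ∈ s, z i ^ 2 :=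
    calc (wt k l * W k l) ^ 2 ≤ (∑ i ∈ s, c i * z i) ^ 2 :=
          pow_le_pow_left₀ (mul_nonneg hwt hW) hbound 2
      _ ≤ (∑ i ∈ s, c i ^ 2) * ∑ i ∈ s, z i ^ 2 := sum_mul_sq_le_sq_mul_sq s c z
      _ ≤ 216 ^ 2 * ∑ i ∈ s, z i ^ 2 := by gcongr
  calc weightedSq θ W k l = θ ^ (k + 2 * l) * (wt k l * W k l) ^ 2 := by
        unfold weightedSq; ring
    _ ≤ θ ^ (k + 2 * l) * (216 ^ 2 * ∑ i ∈ s, z i ^ 2) := by gcongr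
    _ = 216 ^ 2 * ∑ p ∈ range (k + 1), ∑ q ∈ range (l + 1),
          weightedSq θ U p q * weightedSq θ V (k - p) (l - q) := by
        rw [mul_left_comm, sum_product, mul_sum]
        congr 1
        refine sum_congr rfl fun p hp => ?_
        rw [mul_sum]
        refine sum_congr rfl fun q hq => ?_
        rw [mem_range_succ_iff] at hp hq
        rw [show k + 2 * l = (p + 2 * q) + (k - p + 2 * (l - q)) by omega, pow_add]
        unfold weightedSq z
        ring

/-- Lemma 2 of the paper: there is a universal constant `C > 0` such that
whenever `θ > 0` and `(U_{k,l})`, `(V_{k,l})`, `(W_{k,l})` are families of nonnegative reals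
satisfying the Leibniz-type bound
`W_{k,l} ≤ ∑_{p=0}^k ∑_{q=0}^l binom(k,p) binom(l,q) U_{p,q} V_{k-p,l-q}`,
then, with `u_{k,l} = a_{k,l}^2 θ^{k+2l} U_{k,l}^2` (and similarly `v`, `w`), one has
`∑_{k+l ≤ N} w_{k,l} ≤ C (∑_{k+l ≤ N} u_{k,l}) (∑_{k+l ≤ N} v_{k,l})` for every `N`. -/
theorem weighted_sum_product_estimate :
    ∃ C : ℝ, 0 < C ∧ ∀ (θ : ℝ), 0 < θ → ∀ (U V W : ℕ → ℕ → ℝ),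
      (∀ k l, 0 ≤ U k l) → (∀ k l, 0 ≤ V k l) → (∀ k l, 0 ≤ W k l) →
      (∀ k l, W k l ≤ ∑ p ∈ Finset.range (k + 1), ∑ q ∈ Finset.range (l + 1),
          (Nat.choose k p : ℝ) * (Nat.choose l q : ℝ) * U p q * V (k - p) (l - q)) →
      ∀ N : ℕ,
        sumUpTo N (fun k l => wt k l ^ 2 * θ ^ (k + 2 * l) * W k l ^ 2)
          ≤ C * sumUpTo N (fun k l => wt k l ^ 2 * θ ^ (k + 2 * l) * U k l ^ 2)
              * sumUpTo N (fun k l => wt k l ^ 2 * θ ^ (k + 2 * l) * V k l ^ 2) := by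
  refine ⟨216 ^ 2, by positivity, fun θ hθ U V W _ _ hW hL N => ?_⟩
  calc sumUpTo N (weightedSq θ W)
      ≤ sumUpTo N (fun k l => 216 ^ 2 * ∑ p ∈ range (k + 1), ∑ q ∈ range (l + 1),
          weightedSq θ U p q * weightedSq θ V (k - p) (l - q)) :=
        sumUpTo_mono fun k l => weightedSq_le_of_le_leibniz hθ.le (hW k l) (hL k l)
    _ ≤ 216 ^ 2 * (sumUpTo N (weightedSq θ U) * sumUpTo N (weightedSq θ V)) := by
        rw [sumUpTo_const_mul]
        gcongr
        exact sumUpTo_conv_le N (weightedSq_nonneg hθ.le U) (weightedSq_nonneg hθ.le V)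
    _ = _ := (mul_assoc ..).symm
end
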